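/- arXiv:1402.3881 — 5 statements merged into one kernel-verified Lean document; each statement's English description precedes it below -/
import Mathlib

section
/- Let w ∈ Sₙ and let h and h' be two overlapping contiguous subwords of w, each of length c, each of which forms a permutation of Sc (i.e., each consists of c consecutive values). If h is right leaning (respectively, left leaning), then h' is also right leaning (respectively, left leaning), and neither h nor h' is omni leaning. -/
/-- A word with distinct letters is right leaning if for some `k` less than its
length, the first `k` letters are the `k` smallest values. -/
def RightLeaningW (v : List ℕ) : Prop :=
  ∃ k : ℕ, 1 ≤ k ∧ k < v.length ∧ ∀ x ∈ v.take k, ∀ y ∈ v.drop k, x < y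

/-- A word is left leaning if its reversal is right leaning. -/
def LeftLeaningW (v : List ℕ) : Prop := RightLeaningW v.reverse

/-!
Write the two overlapping windows as `P ++ O` and `O ++ S` with `P`, `O`, `S` nonempty and
pairwise disjoint (the letters of `w` are distinct), holding the values `[m, m + c)` and
`[m', m' + c)`. If `m ≤ m'`, every letter of `P` avoids the second window, hence lies below `m'`
and so below `O`; every letter of `S` avoids the first window, hence lies at or above `m + c`
and so above `O`: both windows are right leaning. If `m' ≤ m`, the same argument applied to the
reversed word makes both left leaning. No word is both, since right leaning puts its first
letter below its last and left leaning the opposite.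
-/

theorem rightLeaningW_iff {v : List ℕ} :
    RightLeaningW v ↔
      ∃ a b : List ℕ, v = a ++ b ∧ a ≠ [] ∧ b ≠ [] ∧ ∀ x ∈ a, ∀ y ∈ b, x < y := by
  constructor
  · rintro ⟨k, hk, hkv, h⟩
    refine ⟨v.take k, v.drop k, (List.take_append_drop k v).symm, ?_, ?_, h⟩ <;>
      exact List.ne_nil_of_length_pos (by simp only [List.length_take, List.length_drop]; omega)
  · rintro ⟨a, b, rfl, ha, hb, h⟩
    refine ⟨a.length, List.length_pos_iff.mpr ha, ?_, ?_⟩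
    · simpa using List.length_pos_iff.mpr hb
    · rwa [List.take_left' rfl, List.drop_left' rfl]

theorem RightLeaningW.head_lt_getLast {v : List ℕ} (hv : RightLeaningW v) (hne : v ≠ []) :
    v.head hne < v.getLast hne := by
  obtain ⟨a, b, rfl, ha, hb, h⟩ := rightLeaningW_iff.mp hv
  rw [List.head_append_of_ne_nil ha, List.getLast_append_of_ne_nil _ hb]
  exact h _ (List.head_mem ha) _ (List.getLast_mem hb)

theorem RightLeaningW.not_leftLeaningW {v : List ℕ} (hr : RightLeaningW v) :
    ¬ LeftLeaningW v := by
  intro hl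
  obtain ⟨a, b, rfl, ha, -, -⟩ := rightLeaningW_iff.mp hr
  have hne : a ++ b ≠ [] := by simp [ha]
  have hlt := hl.head_lt_getLast (List.reverse_ne_nil_iff.mpr hne)
  rw [List.head_reverse, List.getLast_reverse] at hlt
  exact lt_asymm hlt (hr.head_lt_getLast hne)

section Overlap

variable {P O S : List ℕ} {m m' c : ℕ}

theorem rightLeaningW_of_overlap (hnd : (P ++ O ++ S).Nodup) (hP : P ≠ []) (hO : O ≠ [])
    (hS : S ≠ []) (hH : (P ++ O).Perm (List.range' m c)) (hH' : (O ++ S).Perm (List.range' m' c))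
    (hle : m ≤ m') : RightLeaningW (P ++ O) ∧ RightLeaningW (O ++ S) := by
  have mem : ∀ x, x ∈ P ++ O ↔ m ≤ x ∧ x < m + c := fun x => by
    rw [hH.mem_iff, List.mem_range'_1]
  have mem' : ∀ x, x ∈ O ++ S ↔ m' ≤ x ∧ x < m' + c := fun x => by
    rw [hH'.mem_iff, List.mem_range'_1]
  have hPO : ∀ x ∈ P, x ∉ O ++ S := fun x hx hx' =>
    (List.nodup_append.mp (List.append_assoc P O S ▸ hnd)).2.2 x hx x hx' rfl
  have hSP : ∀ y ∈ S, y ∉ P ++ O := fun y hy hy' =>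
    (List.nodup_append.mp hnd).2.2 y hy' y hy rfl
  constructor
  · refine rightLeaningW_iff.mpr ⟨P, O, rfl, hP, hO, fun x hx y hy => ?_⟩
    have hx₁ := (mem x).mp (List.mem_append_left O hx)
    have hx₂ : ¬(m' ≤ x ∧ x < m' + c) := fun h => hPO x hx ((mem' x).mpr h)
    have hy₁ := (mem' y).mp (List.mem_append_left S hy)
    omega
  · refine rightLeaningW_iff.mpr ⟨O, S, rfl, hO, hS, fun x hx y hy => ?_⟩
    have hx₁ := (mem x).mp (List.mem_append_right P hx)
    have hy₁ := (mem' y).mp (List.mem_append_right O hy)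
    have hy₂ : ¬(m ≤ y ∧ y < m + c) := fun h => hSP y hy ((mem y).mpr h)
    omega

theorem leaning_of_overlap (hnd : (P ++ O ++ S).Nodup) (hP : P ≠ []) (hO : O ≠ []) (hS : S ≠ [])
    (hH : (P ++ O).Perm (List.range' m c)) (hH' : (O ++ S).Perm (List.range' m' c)) :
    (RightLeaningW (P ++ O) ∧ RightLeaningW (O ++ S)) ∨
      (LeftLeaningW (P ++ O) ∧ LeftLeaningW (O ++ S)) := by
  rcases le_total m m' with hle | hle
  · exact Or.inl (rightLeaningW_of_overlap hnd hP hO hS hH hH' hle)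
  · right
    have hrev := rightLeaningW_of_overlap (P := S.reverse) (O := O.reverse) (S := P.reverse)
      (by simpa using List.nodup_reverse.mpr hnd) (by simpa using hS) (by simpa using hO)
      (by simpa using hP)
      (by simpa using (List.reverse_perm _).trans hH')
      (by simpa using (List.reverse_perm _).trans hH) hle
    simpa only [LeftLeaningW, List.reverse_append, and_comm] using hrev

end Overlap

theorem leaning_of_overlapping_windows {w : List ℕ} (hw : w.Nodup) {i i' c m m' : ℕ}
    (hii' : i < i') (hov : i' < i + c)
    (hhit : ((w.drop i).take c).Perm (List.range' m c))
    (hhit' : ((w.drop i').take c).Perm (List.range' m' c)) :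
    (RightLeaningW ((w.drop i).take c) ∧ RightLeaningW ((w.drop i').take c)) ∨
      (LeftLeaningW ((w.drop i).take c) ∧ LeftLeaningW ((w.drop i').take c)) := by
  obtain ⟨d, rfl⟩ : ∃ d, i' = i + d := ⟨i' - i, by omega⟩
  obtain ⟨e, rfl⟩ : ∃ e, c = d + e := ⟨c - d, by omega⟩
  set P := (w.drop i).take d
  set O := (w.drop (i + d)).take e
  set S := (w.drop (i + d + e)).take d
  have hH : (w.drop i).take (d + e) = P ++ O := by rw [List.take_add, List.drop_drop]
  have hH' : (w.drop (i + d)).take (d + e) = O ++ S := by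
    rw [add_comm d e, List.take_add, List.drop_drop]
  have hPOS : (w.drop i).take (d + e + d) = P ++ O ++ S := by
    rw [List.take_add, hH, List.drop_drop, ← add_assoc]
  have hnd : (P ++ O ++ S).Nodup :=
    hPOS ▸ hw.sublist ((List.take_sublist _ _).trans (List.drop_sublist _ _))
  rw [hH] at hhit ⊢
  rw [hH'] at hhit' ⊢
  have hlen := hhit.length_eq
  have hlen' := hhit'.length_eq
  simp only [List.length_append, List.length_range'] at hlen hlen'
  have hP : P.length ≤ d := List.length_take_le _ _
  have hO : O.length ≤ e := List.length_take_le _ _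
  refine leaning_of_overlap hnd ?_ ?_ ?_ hhit hhit' <;>
    exact List.ne_nil_of_length_pos (by omega)

theorem stmt6_general (n c : ℕ)
    (w : List ℕ) (hw : w.Perm (List.range' 1 n))
    (i i' : ℕ) (hne : i ≠ i')
    (hov : i' < i + c ∧ i < i' + c)
    (m m' : ℕ)
    (hhit : ((w.drop i).take c).Perm (List.range' m c))
    (hhit' : ((w.drop i').take c).Perm (List.range' m' c)) :
    (RightLeaningW ((w.drop i).take c) → RightLeaningW ((w.drop i').take c)) ∧
    (LeftLeaningW ((w.drop i).take c) → LeftLeaningW ((w.drop i').take c)) ∧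
    (RightLeaningW ((w.drop i).take c) ∨ LeftLeaningW ((w.drop i).take c)) ∧
    (RightLeaningW ((w.drop i').take c) ∨ LeftLeaningW ((w.drop i').take c)) := by
  have hnd : w.Nodup := hw.nodup_iff.mpr (List.nodup_range' 1)
  have hlean : (RightLeaningW ((w.drop i).take c) ∧ RightLeaningW ((w.drop i').take c)) ∨
      (LeftLeaningW ((w.drop i).take c) ∧ LeftLeaningW ((w.drop i').take c)) := by
    rcases hne.lt_or_gt with h | h
    · exact leaning_of_overlapping_windows hnd h hov.1 hhit hhit'
    · exact (leaning_of_overlapping_windows hnd h hov.2 hhit' hhit).imp And.symm And.symm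
  rcases hlean with ⟨hR, hR'⟩ | ⟨hL, hL'⟩
  · exact ⟨fun _ => hR', fun hL => absurd hL hR.not_leftLeaningW, .inl hR, .inl hR'⟩
  · exact ⟨fun hR => absurd hL hR.not_leftLeaningW, fun _ => hL', .inr hL, .inr hL'⟩

/-- Two distinct overlapping hits of size `c` in a permutation `w ∈ Sₙ` are both
forward: if one is right (resp. left) leaning so is the other, and neither is
omni leaning. -/
theorem stmt6 (n c : ℕ) (hc : 2 ≤ c) (hcn : c ≤ n)
    (w : List ℕ) (hw : w.Perm (List.range' 1 n))
    (i i' : ℕ) (hi : i + c ≤ n) (hi' : i' + c ≤ n) (hne : i ≠ i')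
    (hov : i' < i + c ∧ i < i' + c)
    (m m' : ℕ)
    (hhit : ((w.drop i).take c).Perm (List.range' m c))
    (hhit' : ((w.drop i').take c).Perm (List.range' m' c)) :
    (RightLeaningW ((w.drop i).take c) → RightLeaningW ((w.drop i').take c)) ∧
    (LeftLeaningW ((w.drop i).take c) → LeftLeaningW ((w.drop i').take c)) ∧
    (RightLeaningW ((w.drop i).take c) ∨ LeftLeaningW ((w.drop i).take c)) ∧
    (RightLeaningW ((w.drop i').take c) ∨ LeftLeaningW ((w.drop i').take c)) :=
  stmt6_general n c w hw i i' hne hov m m' hhit hhit'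
end

section
/- Let P be a partition of a subset of Sc and suppose w, w' ∈ Sₙ are equivalent under the P-equivalence. If i, j are positions with |i − j| ≥ c and wᵢ < wⱼ, then w'ᵢ < w'ⱼ. -/
/-- `P` (a family of parts, each a set of patterns from `S_c` written as lists) is a
partition of a subset of `S_c`: parts are nonempty, pairwise disjoint, and consist
of permutations of `{1, …, c}`. -/
def IsReplacementPartition (c : ℕ) (P : Set (Set (List ℕ))) : Prop :=
  (∀ B ∈ P, B.Nonempty) ∧
  (∀ B ∈ P, ∀ p ∈ B, p.Perm (List.range' 1 c)) ∧
  (∀ B ∈ P, ∀ B' ∈ P, B ≠ B' → B ∩ B' = ∅)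

/-- A single `P`-rearrangement: a contiguous subword of length `c` forming (a shift
by `m` of) a pattern `p` in some part `B` of `P` is rearranged to form (the same
shift of) a pattern `q` in the same part `B`; all other letters are unchanged. -/
def PRearr (c : ℕ) (P : Set (Set (List ℕ))) (w w' : List ℕ) : Prop :=
  ∃ (i m : ℕ) (B : Set (List ℕ)) (p q : List ℕ),
    B ∈ P ∧ p ∈ B ∧ q ∈ B ∧ i + c ≤ w.length ∧
    w = w.take i ++ p.map (· + m) ++ w.drop (i + c) ∧
    w' = w.take i ++ q.map (· + m) ++ w.drop (i + c)

/-!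
A rearrangement replaces a block of `c` adjacent letters by another arrangement of the same
`c` consecutive values, so positions outside the block keep their letters, and since the word
has no repeated letters, those letters lie outside the interval of values of the block. Two
positions at distance at least `c` cannot both lie in the block; if one of them does, its
letter stays inside an interval that does not contain the other letter, so the comparison
between the two letters cannot change. Rearrangements permute the word, so it stays free of
repeated letters along the whole equivalence class and the argument applies at every step.
-/

namespace List

variable {A X Y C : List ℕ} {k : ℕ}

theorem getD_mem_or_eq_default {α : Type*} (l : List α) (n : ℕ) (d : α) :
    l.getD n d ∈ l ∨ l.getD n d = d := by
  rcases lt_or_ge n l.length with hn | hn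
  · exact .inl (getD_eq_getElem l d hn ▸ getElem_mem hn)
  · exact .inr (getD_eq_default l d hn)

theorem getD_append_append_of_lt (hk : k < A.length) (d : ℕ) :
    (A ++ X ++ C).getD k d = A.getD k d := by
  rw [append_assoc, getD_append _ _ _ _ hk]

theorem getD_append_append_of_le (hk : A.length + X.length ≤ k) (d : ℕ) :
    (A ++ X ++ C).getD k d = C.getD (k - (A.length + X.length)) d := by
  rw [getD_append_right _ _ _ _ (by simpa using hk), length_append]

theorem getD_append_append_mem_middle (hk₁ : A.length ≤ k) (hk₂ : k < A.length + X.length)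
    (d : ℕ) : (A ++ X ++ C).getD k d ∈ X := by
  rw [getD_append _ _ _ _ (by simpa using hk₂), getD_append_right _ _ _ _ hk₁,
    getD_eq_getElem _ _ (by omega)]
  exact getElem_mem _

theorem getD_append_append_congr_middle (hXY : X.length = Y.length)
    (hk : k < A.length ∨ A.length + X.length ≤ k) (d : ℕ) :
    (A ++ X ++ C).getD k d = (A ++ Y ++ C).getD k d := by
  rcases hk with hk | hk
  · rw [getD_append_append_of_lt hk, getD_append_append_of_lt hk]
  · rw [getD_append_append_of_le hk, getD_append_append_of_le (hXY ▸ hk), hXY]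

theorem getD_append_append_not_mem_middle (hnd : (A ++ X ++ C).Nodup) {d : ℕ} (hd : d ∉ X)
    (hk : k < A.length ∨ A.length + X.length ≤ k) : (A ++ X ++ C).getD k d ∉ X := by
  have hAX : ∀ x ∈ A, x ∉ X := fun x hx hxX =>
    (nodup_append.1 (nodup_append.1 hnd).1).2.2 x hx x hxX rfl
  have hCX : ∀ x ∈ C, x ∉ X := fun x hx hxX =>
    (nodup_append.1 hnd).2.2 x (mem_append_right A hxX) x hx rfl
  rcases hk with hk | hk
  · rw [getD_append_append_of_lt hk]
    rcases getD_mem_or_eq_default A k d with h | h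
    · exact hAX _ h
    · exact h.symm ▸ hd
  · rw [getD_append_append_of_le hk]
    rcases getD_mem_or_eq_default C (k - (A.length + X.length)) d with h | h
    · exact hCX _ h
    · exact h.symm ▸ hd

theorem getD_lt_getD_iff_of_perm_range'_middle {a c l : ℕ} (ha : 0 < a)
    (hX : X.Perm (range' a c)) (hY : Y.Perm (range' a c)) (hnd : (A ++ X ++ C).Nodup)
    (hfar : k + c ≤ l ∨ l + c ≤ k) :
    (A ++ X ++ C).getD k 0 < (A ++ X ++ C).getD l 0 ↔
      (A ++ Y ++ C).getD k 0 < (A ++ Y ++ C).getD l 0 := by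
  have hXc : X.length = c := by simpa using hX.length_eq
  have hYc : Y.length = c := by simpa using hY.length_eq
  have inside : ∀ t, A.length ≤ t → t < A.length + c →
      (a ≤ (A ++ X ++ C).getD t 0 ∧ (A ++ X ++ C).getD t 0 < a + c) ∧
        (a ≤ (A ++ Y ++ C).getD t 0 ∧ (A ++ Y ++ C).getD t 0 < a + c) := fun t ht₁ ht₂ =>
    ⟨mem_range'_1.1 (hX.subset (getD_append_append_mem_middle ht₁ (hXc ▸ ht₂) 0)),
      mem_range'_1.1 (hY.subset (getD_append_append_mem_middle ht₁ (hYc ▸ ht₂) 0))⟩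
  have outside : ∀ t, t < A.length ∨ A.length + c ≤ t →
      (A ++ Y ++ C).getD t 0 = (A ++ X ++ C).getD t 0 ∧
        ((A ++ X ++ C).getD t 0 < a ∨ a + c ≤ (A ++ X ++ C).getD t 0) := by
    intro t ht
    rw [← hXc] at ht
    refine ⟨(getD_append_append_congr_middle (hXc.trans hYc.symm) ht 0).symm, ?_⟩
    -- `0 < a` keeps the default value `0` of `getD`, read past the end of the word, out of the block.
    have h0 : 0 ∉ X := fun h => by have := mem_range'_1.1 (hX.subset h); omega
    have htX := getD_append_append_not_mem_middle hnd h0 ht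
    rw [hX.mem_iff, mem_range'_1] at htX
    omega
  by_cases hk : A.length ≤ k ∧ k < A.length + c
  · obtain ⟨hl, hl'⟩ := outside l (by omega)
    have := inside k hk.1 hk.2
    rw [hl]
    omega
  by_cases hl : A.length ≤ l ∧ l < A.length + c
  · obtain ⟨hk, hk'⟩ := outside k (by omega)
    have := inside l hl.1 hl.2
    rw [hk]
    omega
  rw [(outside k (by omega)).1, (outside l (by omega)).1]

end List

theorem List.Perm.map_add_range' {p : List ℕ} {s c : ℕ} (hp : p.Perm (List.range' s c))
    (m : ℕ) : (p.map (· + m)).Perm (List.range' (m + s) c) := by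
  have := hp.map (m + ·)
  rwa [List.map_add_range', List.map_congr_left (fun x _ => Nat.add_comm m x)] at this

namespace PRearr

variable {c : ℕ} {P : Set (Set (List ℕ))} {w w' : List ℕ}

theorem exists_eq_append_perm_range' (hP : IsReplacementPartition c P) (h : PRearr c P w w') :
    ∃ (A X Y C : List ℕ) (a : ℕ), 0 < a ∧ X.Perm (List.range' a c) ∧
      Y.Perm (List.range' a c) ∧ w = A ++ X ++ C ∧ w' = A ++ Y ++ C := by
  obtain ⟨s, m, B, p, q, hB, hp, hq, -, hwE, hw'E⟩ := h
  exact ⟨_, _, _, _, m + 1, m.succ_pos, (hP.2.1 B hB p hp).map_add_range' m,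
    (hP.2.1 B hB q hq).map_add_range' m, hwE, hw'E⟩

theorem perm (hP : IsReplacementPartition c P) (h : PRearr c P w w') : w.Perm w' := by
  obtain ⟨A, X, Y, C, a, -, hX, hY, rfl, rfl⟩ := h.exists_eq_append_perm_range' hP
  exact ((hX.trans hY.symm).append_left A).append_right C

theorem getD_lt_getD_iff (hP : IsReplacementPartition c P) (h : PRearr c P w w')
    (hnd : w.Nodup) {i j : ℕ} (hfar : i + c ≤ j ∨ j + c ≤ i) :
    w.getD i 0 < w.getD j 0 ↔ w'.getD i 0 < w'.getD j 0 := by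
  obtain ⟨A, X, Y, C, a, ha, hX, hY, rfl, rfl⟩ := h.exists_eq_append_perm_range' hP
  exact List.getD_lt_getD_iff_of_perm_range'_middle ha hX hY hnd hfar

end PRearr

theorem Relation.EqvGen.iff_of_forall_iff {α : Type*} {r : α → α → Prop} {f : α → Prop}
    (h : ∀ a b, r a b → (f a ↔ f b)) {a b : α} (hab : Relation.EqvGen r a b) : f a ↔ f b := by
  induction hab with
  | rel a b hr => exact h a b hr
  | refl => rfl
  | symm _ _ _ ih => exact ih.symm
  | trans _ _ _ _ _ ih₁ ih₂ => exact ih₁.trans ih₂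

theorem stmt7_general (n c : ℕ) (P : Set (Set (List ℕ)))
    (hP : IsReplacementPartition c P)
    (w w' : List ℕ) (hw : w.Perm (List.range' 1 n))
    (heq : Relation.EqvGen (PRearr c P) w w')
    (i j : ℕ)
    (hfar : i + c ≤ j ∨ j + c ≤ i)
    (hlt : w.getD i 0 < w.getD j 0) :
    w'.getD i 0 < w'.getD j 0 := by
  have step : ∀ u v, PRearr c P u v →
      (u.Nodup ∧ u.getD i 0 < u.getD j 0 ↔ v.Nodup ∧ v.getD i 0 < v.getD j 0) := by
    intro u v h
    rw [← (h.perm hP).nodup_iff]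
    exact and_congr_right fun hu => h.getD_lt_getD_iff hP hu hfar
  exact ((heq.iff_of_forall_iff step).1 ⟨hw.nodup_iff.2 (List.nodup_range' 1), hlt⟩).2

/-- If `w ≡ w'` under the `P`-equivalence and `|i − j| ≥ c` with `wᵢ < wⱼ`,
then `w'ᵢ < w'ⱼ`. -/
theorem stmt7 (n c : ℕ) (hc : 1 ≤ c) (P : Set (Set (List ℕ)))
    (hP : IsReplacementPartition c P)
    (w w' : List ℕ) (hw : w.Perm (List.range' 1 n))
    (heq : Relation.EqvGen (PRearr c P) w w')
    (i j : ℕ) (hi : i < n) (hj : j < n)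
    (hfar : i + c ≤ j ∨ j + c ≤ i)
    (hlt : w.getD i 0 < w.getD j 0) :
    w'.getD i 0 < w'.getD j 0 :=
  stmt7_general n c P hP w w' hw heq i j hfar hlt
end

section
/- Every permutation w of {1,…,n} admits a unique decomposition w = v₁v₂⋯v_k into maximal runs where each vᵢ is a contiguous subword that is an increasing or decreasing sequence of consecutive integers, with k minimal; moreover this minimal decomposition is unique. -/
/-- A nonempty word which is an increasing or a decreasing run of consecutive
integers. -/
def RunWord (v : List ℕ) : Prop :=
  v ≠ [] ∧ ((∃ m : ℕ, v = List.range' m v.length) ∨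
    (∃ m : ℕ, v = (List.range' m v.length).reverse))

/-- `L` is a decomposition of `w` into increasing-or-decreasing
consecutive-integer runs. -/
def RunDecomp (w : List ℕ) (L : List (List ℕ)) : Prop :=
  L.flatten = w ∧ ∀ v ∈ L, RunWord v

/-!
In a word with distinct letters, a nonempty factor is a run of consecutive integers exactly when
any two adjacent letters differ by one. So for a permutation the admissible decompositions are the
decompositions into nonempty chains of the relation "differ by one". For any relation, the
decomposition into maximal chains (`List.splitBy`) is the unique shortest one: a decomposition
that is not `splitBy` (by `List.splitBy_eq_iff`) has two adjacent pieces that join into a chain,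
and merging them gives a shorter decomposition.
-/

namespace List

variable {α : Type*} {r : α → α → Bool}

def IsChainDecomp (r : α → α → Bool) (l : List α) (L : List (List α)) : Prop :=
  L.flatten = l ∧ [] ∉ L ∧ ∀ m ∈ L, m.IsChain fun x y ↦ r x y

theorem isChainDecomp_splitBy (r : α → α → Bool) (l : List α) :
    IsChainDecomp r l (l.splitBy r) :=
  ⟨flatten_splitBy r l, nil_notMem_splitBy r l, fun _ ↦ isChain_of_mem_splitBy⟩

theorem IsChainDecomp.exists_merge {l : List α} {L : List (List α)}
    (hL : IsChainDecomp r l L)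
    (hbreak : ¬ L.IsChain fun a b ↦ ∃ ha hb, r (a.getLast ha) (b.head hb) = false) :
    ∃ L', IsChainDecomp r l L' ∧ L'.length + 1 = L.length := by
  obtain ⟨rfl, hnil, hchain⟩ := hL
  induction L with
  | nil => exact absurd isChain_nil hbreak
  | cons a L ih =>
    cases L with
    | nil => exact absurd (isChain_singleton a) hbreak
    | cons b t =>
      have ha : a ≠ [] := fun h ↦ hnil (h ▸ mem_cons_self)
      have hb : b ≠ [] := fun h ↦ hnil (h ▸ mem_cons_of_mem _ mem_cons_self)
      rw [isChain_cons_cons] at hbreak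
      by_cases hab : ∃ ha hb, r (a.getLast ha) (b.head hb) = false
      · obtain ⟨L', hL', hlen⟩ := ih (fun h ↦ hbreak ⟨hab, h⟩)
          (fun h ↦ hnil (mem_cons_of_mem _ h)) (fun m hm ↦ hchain m (mem_cons_of_mem _ hm))
        refine ⟨a :: L', ⟨by simp [hL'.1], ?_, ?_⟩, by simp [hlen]⟩
        · simpa [eq_comm] using And.intro ha hL'.2.1
        · simpa using And.intro (hchain a mem_cons_self) hL'.2.2
      · have hjoin : (a ++ b).IsChain fun x y ↦ r x y := by
          refine isChain_append.mpr ⟨hchain a mem_cons_self,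
            hchain b (mem_cons_of_mem _ mem_cons_self), ?_⟩
          simp only [getLast?_eq_some_getLast ha, head?_eq_some_head hb, Option.mem_some_iff]
          rintro _ rfl _ rfl
          simpa [ha, hb] using hab
        refine ⟨(a ++ b) :: t, ⟨by simp, ?_, ?_⟩, by simp⟩
        · simp only [mem_cons, not_or] at hnil ⊢
          exact ⟨by simp [ha], hnil.2.2⟩
        · simp only [mem_cons, forall_eq_or_imp] at hchain ⊢
          exact ⟨hjoin, hchain.2.2⟩

theorem IsChainDecomp.eq_splitBy_or_length_lt {l : List α} {L : List (List α)}
    (hL : IsChainDecomp r l L) : L = l.splitBy r ∨ (l.splitBy r).length < L.length := by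
  induction hn : L.length using Nat.strong_induction_on generalizing L with
  | _ n ih =>
    by_cases hjoin : L.IsChain fun a b ↦ ∃ ha hb, r (a.getLast ha) (b.head hb) = false
    · exact Or.inl (splitBy_eq_iff.mpr ⟨hL.1.symm, hL.2.1, hL.2.2, hjoin⟩).symm
    · obtain ⟨L', hL', hlen⟩ := hL.exists_merge hjoin
      right
      rcases ih L'.length (by omega) hL' rfl with rfl | hlt <;> omega

theorem existsUnique_isChainDecomp_length_minimal (r : α → α → Bool) (l : List α) :
    ∃! L, IsChainDecomp r l L ∧ ∀ L', IsChainDecomp r l L' → L.length ≤ L'.length := by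
  refine ⟨l.splitBy r, ⟨isChainDecomp_splitBy r l, fun L' hL' ↦ ?_⟩, fun L ⟨hL, hmin⟩ ↦ ?_⟩
  · rcases hL'.eq_splitBy_or_length_lt with rfl | hlt
    exacts [le_rfl, hlt.le]
  · exact hL.eq_splitBy_or_length_lt.resolve_right
      (not_lt.mpr (hmin _ (isChainDecomp_splitBy r l)))

end List

open List

def differByOne (a b : ℕ) : Bool := b = a + 1 ∨ a = b + 1

theorem eq_range'_of_isChain_succ {a : ℕ} {t : List ℕ}
    (h : (a :: t).IsChain fun x y ↦ y = x + 1) : a :: t = range' a (a :: t).length := by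
  induction t generalizing a with
  | nil => rfl
  | cons b t ih =>
    obtain ⟨rfl, h⟩ := isChain_cons_cons.mp h
    rw [ih h]
    simp [range'_succ]

theorem isChain_succ_iff_eq_range' {l : List ℕ} :
    (l.IsChain fun x y ↦ y = x + 1) ↔ ∃ m, l = range' m l.length := by
  refine ⟨fun h ↦ ?_, fun ⟨m, hm⟩ ↦ hm ▸ isChain_range' m _ 1⟩
  cases l with
  | nil => exact ⟨0, rfl⟩
  | cons a t => exact ⟨a, eq_range'_of_isChain_succ h⟩

theorem isChain_succ_or_pred_of_nodup :
    ∀ {l : List ℕ}, l.Nodup → (l.IsChain fun x y ↦ differByOne x y) →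
      (l.IsChain fun x y ↦ y = x + 1) ∨ l.IsChain fun x y ↦ x = y + 1
  | [], _, _ => Or.inl isChain_nil
  | [a], _, _ => Or.inl (isChain_singleton a)
  | [a, b], _, h => by simpa [differByOne] using h
  | a :: b :: c :: t, hnd, h => by
    have hac : a ≠ c := fun hac ↦ by simp [hac] at hnd
    have hab := (isChain_cons_cons.mp h).1
    simp only [differByOne, decide_eq_true_eq] at hab
    rcases isChain_succ_or_pred_of_nodup hnd.of_cons h.tail with hs | hp
    · have hbc := (isChain_cons_cons.mp hs).1
      exact Or.inl (hs.cons_cons (by omega))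
    · have hbc := (isChain_cons_cons.mp hp).1
      exact Or.inr (hp.cons_cons (by omega))

theorem runWord_iff_of_nodup {v : List ℕ} (hv : v.Nodup) :
    RunWord v ↔ v ≠ [] ∧ v.IsChain fun x y ↦ differByOne x y := by
  have hpred : (v.IsChain fun x y ↦ x = y + 1) ↔ ∃ m, v = (range' m v.length).reverse := by
    rw [← isChain_reverse]
    simp only [isChain_succ_iff_eq_range', length_reverse, reverse_eq_iff]
  rw [RunWord, ← isChain_succ_iff_eq_range', ← hpred]
  refine and_congr_right fun _ ↦ ⟨?_, isChain_succ_or_pred_of_nodup hv⟩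
  rintro (h | h) <;> refine h.imp fun x y hxy ↦ ?_ <;> simp [differByOne, hxy]

theorem runDecomp_iff_isChainDecomp {w : List ℕ} (hw : w.Nodup) {L : List (List ℕ)} :
    RunDecomp w L ↔ IsChainDecomp differByOne w L := by
  refine and_congr_right fun hflat ↦ ?_
  have hnodup : ∀ v ∈ L, v.Nodup := fun v hv ↦
    hw.sublist (hflat ▸ sublist_flatten_of_mem hv)
  rw [forall₂_congr fun v hv ↦ runWord_iff_of_nodup (hnodup v hv)]
  simp only [forall_and]
  exact and_congr_left' ⟨fun h hnil ↦ h [] hnil rfl, fun h v hv hnil ↦ h (hnil ▸ hv)⟩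

theorem stmt15_general (n : ℕ) (w : List ℕ) (hw : w.Perm (List.range' 1 n)) :
    ∃! L : List (List ℕ), RunDecomp w L ∧
      ∀ L' : List (List ℕ), RunDecomp w L' → L.length ≤ L'.length := by
  have hnodup : w.Nodup := hw.nodup_iff.mpr nodup_range'
  simp only [runDecomp_iff_isChainDecomp hnodup]
  exact existsUnique_isChainDecomp_length_minimal differByOne w

/-- Every permutation of `{1, …, n}` admits a unique decomposition of minimal
length into contiguous increasing-or-decreasing runs of consecutive integers. -/
theorem stmt15 (n : ℕ) (hn : 1 ≤ n) (w : List ℕ) (hw : w.Perm (List.range' 1 n)) :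
    ∃! L : List (List ℕ), RunDecomp w L ∧
      ∀ L' : List (List ℕ), RunDecomp w L' → L.length ≤ L'.length :=
  stmt15_general n w hw
end

section
/- Every c-toothed permutation in Sₙ is equivalent to the identity permutation idₙ = 12⋯n under the S_c-equivalence. -/
/-- A single step of the `S_c`-equivalence: the letters of a contiguous subword of
length `c` whose values are `c` consecutive integers are rearranged arbitrarily;
everything else is unchanged. -/
def ScStep (c : ℕ) (w w' : List ℕ) : Prop :=
  ∃ i m : ℕ, i + c ≤ w.length ∧ w.length = w'.length ∧
    w.take i = w'.take i ∧ w.drop (i + c) = w'.drop (i + c) ∧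
    ((w.drop i).take c).Perm (List.range' m c) ∧
    ((w'.drop i).take c).Perm (List.range' m c)

/-- The splitting points of `w ∈ Sₙ`. -/
def Splits (n : ℕ) (w : List ℕ) : Set ℕ :=
  {k | k ≤ n ∧ (w.take k).toFinset = Finset.Icc 1 k}

/-- `w ∈ Sₙ` is `c`-toothed: every irreducible block has size `< c`, and some
consecutive run of irreducible blocks has sizes summing to exactly `c`. -/
def Toothed (c n : ℕ) (w : List ℕ) : Prop :=
  (∀ k ∈ Splits n w, k < n → ∃ k' ∈ Splits n w, k < k' ∧ k' ≤ k + (c - 1)) ∧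
  (∃ a ∈ Splits n w, a + c ∈ Splits n w)

/-!
Fix splitting points `a` and `a + c`. The window between them holds `c` consecutive values,
so one step sorts it. The sorted stretch, being at least `c` long, can then swallow the next
irreducible block on either side: that block has fewer than `c` letters, and together with the
adjacent sorted letters it fills a window of exactly `c` consecutive values, which one step
sorts. Because every block is shorter than `c`, the stretch grows block by block until it
covers the whole word, which is then the identity.
-/

theorem scStep_append_of_perm {c m : ℕ} {X Y : List ℕ} (P S : List ℕ)
    (hX : X.Perm (List.range' m c)) (hY : Y.Perm (List.range' m c)) :
    ScStep c (P ++ X ++ S) (P ++ Y ++ S) := by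
  have hXl : X.length = c := by simpa using hX.length_eq
  have hYl : Y.length = c := by simpa using hY.length_eq
  refine ⟨P.length, m, by simp [hXl], by simp [hXl, hYl], ?_, ?_, ?_, ?_⟩
  · simp
  · simp [List.drop_append, hXl, hYl]
  · simpa [List.drop_append, List.take_append, hXl] using hX
  · simpa [List.drop_append, List.take_append, hYl] using hY

theorem scStep_absorb_right {c m u b : ℕ} {B : List ℕ} (P S : List ℕ)
    (hB : B.Perm (List.range' (m + u) b)) (hbc : b ≤ c) (hcub : c ≤ u + b) :
    ScStep c (P ++ List.range' m u ++ B ++ S) (P ++ List.range' m (u + b) ++ S) := by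
  -- the window consists of the last `c - b` sorted letters followed by `B`
  obtain ⟨v, l, rfl, rfl⟩ : ∃ v l, u = v + l ∧ c = l + b :=
    ⟨u + b - c, c - b, by omega, by omega⟩
  have hX : (List.range' (m + v) l ++ B).Perm (List.range' (m + v) (l + b)) := by
    rw [← List.range'_append_1, Nat.add_assoc]
    exact hB.append_left _
  convert scStep_append_of_perm (P ++ List.range' m v) S hX (List.Perm.refl _) using 2
  · simp [← List.range'_append_1]
  · simp [← List.range'_append_1, Nat.add_assoc]

theorem scStep_absorb_left {c m u b : ℕ} {B : List ℕ} (P S : List ℕ)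
    (hB : B.Perm (List.range' m b)) (hbc : b ≤ c) (hcub : c ≤ b + u) :
    ScStep c (P ++ B ++ List.range' (m + b) u ++ S) (P ++ List.range' m (b + u) ++ S) := by
  obtain ⟨v, l, rfl, rfl⟩ : ∃ v l, u = l + v ∧ c = b + l :=
    ⟨b + u - c, c - b, by omega, by omega⟩
  have hX : (B ++ List.range' (m + b) l).Perm (List.range' m (b + l)) := by
    rw [← List.range'_append_1]
    exact hB.append_right _
  convert scStep_append_of_perm P (List.range' (m + b + l) v ++ S) hX (List.Perm.refl _) using 1
  · simp [← List.range'_append_1]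
  · simp [← List.range'_append_1, Nat.add_assoc]

namespace Splits

variable {n : ℕ} {w : List ℕ}

theorem take_perm (hw : w.Nodup) {k : ℕ} (hk : k ∈ Splits n w) :
    (w.take k).Perm (List.range' 1 k) :=
  List.perm_of_nodup_nodup_toFinset_eq (hw.sublist (List.take_sublist _ _)) List.nodup_range'
    (by rw [hk.2, List.toFinset_range'_1_1])

theorem segment_perm (hw : w.Nodup) {i j : ℕ} (hi : i ∈ Splits n w) (hj : j ∈ Splits n w)
    (hij : i ≤ j) : ((w.drop i).take (j - i)).Perm (List.range' (i + 1) (j - i)) := by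
  obtain ⟨d, rfl⟩ := Nat.exists_eq_add_of_le hij
  have h := take_perm hw hj
  rw [List.take_add, ← List.range'_append_1, Nat.add_comm 1 i] at h
  simpa using (List.perm_append_left_iff _).1 (((take_perm hw hi).append_right _).symm.trans h)

end Splits

/-- For splitting points `i ≤ j` of `w`, this is `w` with its letters in positions `[i, j)`
sorted increasingly. -/
def sortBetween (w : List ℕ) (i j : ℕ) : List ℕ :=
  w.take i ++ List.range' (i + 1) (j - i) ++ w.drop j

theorem sortBetween_self (w : List ℕ) (i : ℕ) : sortBetween w i i = w := by
  simp [sortBetween]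

theorem sortBetween_zero_of_length_le {w : List ℕ} {n : ℕ} (hn : w.length ≤ n) :
    sortBetween w 0 n = List.range' 1 n := by
  simp [sortBetween, hn]

section

variable {c n : ℕ} {w : List ℕ}

theorem scStep_sortBetween_extend_right (hw : w.Nodup) {i j k : ℕ} (hj : j ∈ Splits n w)
    (hk : k ∈ Splits n w) (hij : i ≤ j) (hjk : j ≤ k) (hkjc : k - j ≤ c)
    (hcki : c ≤ k - i) :
    ScStep c (sortBetween w i j) (sortBetween w i k) := by
  have hB := Splits.segment_perm hw hj hk hjk
  rw [show j + 1 = i + 1 + (j - i) by omega] at hB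
  convert scStep_absorb_right (w.take i) (w.drop k) hB hkjc (by omega) using 1
  · rw [sortBetween, List.append_assoc _ _ (List.drop k w)]
    congr 1
    nth_rw 1 [← List.take_append_drop (k - j) (w.drop j)]
    rw [List.drop_drop, Nat.add_sub_cancel' hjk]
  · rw [sortBetween, show j - i + (k - j) = k - i by omega]

theorem scStep_sortBetween_extend_left (hw : w.Nodup) {i j k : ℕ} (hi : i ∈ Splits n w)
    (hj : j ∈ Splits n w) (hij : i ≤ j) (hjk : j ≤ k) (hjic : j - i ≤ c)
    (hcki : c ≤ k - i) :
    ScStep c (sortBetween w j k) (sortBetween w i k) := by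
  have hB := Splits.segment_perm hw hi hj hij
  convert scStep_absorb_left (w.take i) (w.drop k) hB hjic (u := k - j) (by omega) using 1
  · rw [sortBetween, ← List.take_add, Nat.add_sub_cancel' hij,
      show i + 1 + (j - i) = j + 1 by omega]
  · rw [sortBetween, show j - i + (k - j) = k - i by omega]

end

theorem exists_gap_below {S : Set ℕ} {n d : ℕ} (h0 : 0 ∈ S)
    (hgap : ∀ k ∈ S, k < n → ∃ k' ∈ S, k < k' ∧ k' ≤ k + d)
    {j : ℕ} (hj0 : 0 < j) (hjn : j ≤ n) :
    ∃ i ∈ S, i < j ∧ j ≤ i + d := by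
  classical
  set i := Nat.findGreatest (· ∈ S) (j - 1)
  have hi : i ∈ S := Nat.findGreatest_spec (P := (· ∈ S)) (Nat.zero_le _) h0
  have hij : i < j := by have := Nat.findGreatest_le (P := (· ∈ S)) (j - 1); omega
  obtain ⟨k, hk, hik, hkd⟩ := hgap i hi (by omega)
  refine ⟨i, hi, hij, ?_⟩
  by_contra hlt
  exact Nat.findGreatest_is_greatest hik (by omega) hk

theorem eqvGen_of_descent {α : Type*} {r : α → α → Prop} (f : ℕ → α) (μ : ℕ → ℕ)
    {S : Set ℕ} {t : ℕ}
    (h : ∀ k ∈ S, k ≠ t → ∃ k' ∈ S, μ k' < μ k ∧ r (f k) (f k')) :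
    ∀ k ∈ S, Relation.EqvGen r (f k) (f t) := by
  intro k hk
  induction hμ : μ k using Nat.strong_induction_on generalizing k with
  | _ m ih =>
    by_cases hkt : k = t
    · subst hkt
      exact Relation.EqvGen.refl _
    · obtain ⟨k', hk', hlt, hr⟩ := h k hk hkt
      exact (Relation.EqvGen.rel _ _ hr).trans _ _ _ (ih _ (hμ ▸ hlt) k' hk' rfl)

theorem stmt17_general (n c : ℕ)
    (w : List ℕ) (hw : w.Perm (List.range' 1 n))
    (ht : Toothed c n w) :
    Relation.EqvGen (ScStep c) w (List.range' 1 n) := by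
  obtain ⟨hgap, a, ha, hac⟩ := ht
  have hnd : w.Nodup := hw.nodup_iff.2 List.nodup_range'
  have hlen : w.length = n := by simpa using hw.length_eq
  have hacn : a + c ≤ n := hac.1
  have sort_window : ScStep c w (sortBetween w a (a + c)) := by
    simpa only [sortBetween_self] using
      scStep_sortBetween_extend_right hnd ha hac le_rfl (by omega) (by omega) (by omega)
  have sort_right : Relation.EqvGen (ScStep c) (sortBetween w a (a + c)) (sortBetween w a n) := by
    refine eqvGen_of_descent (sortBetween w a) (n - ·)
      (S := {k | k ∈ Splits n w ∧ a + c ≤ k}) ?_ (a + c) ⟨hac, le_rfl⟩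
    rintro k ⟨hk, hak⟩ hkn
    obtain ⟨k', hk', hkk', hk'k⟩ := hgap k hk (lt_of_le_of_ne hk.1 hkn)
    exact ⟨k', ⟨hk', by omega⟩, by have := hk'.1; omega,
      scStep_sortBetween_extend_right hnd hk hk' (by omega) hkk'.le (by omega) (by omega)⟩
  have sort_left : Relation.EqvGen (ScStep c) (sortBetween w a n) (sortBetween w 0 n) := by
    refine eqvGen_of_descent (sortBetween w · n) id (S := {j | j ∈ Splits n w ∧ j ≤ a})
      ?_ a ⟨ha, le_rfl⟩
    rintro j ⟨hj, hja⟩ hj0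
    obtain ⟨i, hi, hij, hji⟩ :=
      exists_gap_below (show 0 ∈ Splits n w by simp [Splits]) hgap (Nat.pos_of_ne_zero hj0) hj.1
    exact ⟨i, ⟨hi, by omega⟩, hij,
      scStep_sortBetween_extend_left hnd hi hj hij.le (by omega) (by omega) (by omega)⟩
  rw [← sortBetween_zero_of_length_le hlen.le]
  exact (Relation.EqvGen.rel _ _ sort_window).trans _ _ _ (sort_right.trans _ _ _ sort_left)

/-- Every `c`-toothed permutation in `Sₙ` is equivalent to the identity permutation
`idₙ = 12⋯n` under the `S_c`-equivalence. -/
theorem stmt17 (n c : ℕ) (hc : 2 ≤ c) (hcn : c ≤ n)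
    (w : List ℕ) (hw : w.Perm (List.range' 1 n))
    (ht : Toothed c n w) :
    Relation.EqvGen (ScStep c) w (List.range' 1 n) :=
  stmt17_general n c w hw ht
end

section
/- Let w ∈ Sₙ and let h be a contiguous subword of w of length c whose values are c consecutive integers, with h right leaning. If the letters of any contiguous subword of h are sorted into increasing order (in place), the resulting length-c subword is still right leaning. -/
namespace List

variable {α : Type*}

section LT

variable [LT α]

def SplitsAt (v : List α) (k : ℕ) : Prop :=
  ∀ x ∈ v.take k, ∀ y ∈ v.drop k, x < y

theorem SplitsAt.of_subset {v w : List α} {k : ℕ} (hv : v.SplitsAt k)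
    (htake : w.take k ⊆ v.take k) (hdrop : w.drop k ⊆ v.drop k) : w.SplitsAt k :=
  fun x hx y hy => hv x (htake hx) y (hdrop hy)

theorem SplitsAt.infix {p q r : List α} {k : ℕ} (h : (p ++ q ++ r).SplitsAt k) :
    q.SplitsAt (k - p.length) := by
  intro x hx y hy
  refine h x ?_ y ?_ <;> simp only [append_assoc, take_append, drop_append, mem_append] <;> tauto

end LT

section LinearOrder

variable [LinearOrder α]

theorem SplitsAt.perm_take_drop_of_pairwise {q s : List α} {n : ℕ} (hq : q.SplitsAt n)
    (hs : s ~ q) (hsorted : s.Pairwise (· < ·)) :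
    s.take n ~ q.take n ∧ s.drop n ~ q.drop n := by
  set t₁ := (q.take n).insertionSort (· ≤ ·)
  set t₂ := (q.drop n).insertionSort (· ≤ ·)
  have ht₁ : t₁ ~ q.take n := perm_insertionSort _ _
  have ht₂ : t₂ ~ q.drop n := perm_insertionSort _ _
  have hst : s = t₁ ++ t₂ := by
    refine (hs.trans ?_).eq_of_pairwise' (hsorted.imp le_of_lt) ?_
    · simpa only [take_append_drop] using (ht₁.append ht₂).symm
    · exact pairwise_append.2 ⟨pairwise_insertionSort _ _, pairwise_insertionSort _ _,
        fun x hx y hy => (hq x (ht₁.subset hx) y (ht₂.subset hy)).le⟩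
  have hn : min n s.length = t₁.length := by
    rw [ht₁.length_eq, length_take, hs.length_eq]
  rw [take_eq_take_min, drop_eq_drop_min, hn, hst, take_left, drop_left]
  exact ⟨ht₁, ht₂⟩

theorem SplitsAt.sort_infix {p q r s : List α} {k : ℕ} (h : (p ++ q ++ r).SplitsAt k)
    (hs : s ~ q) (hsorted : s.Pairwise (· < ·)) : (p ++ s ++ r).SplitsAt k := by
  obtain ⟨htake, hdrop⟩ := h.infix.perm_take_drop_of_pairwise hs hsorted
  apply h.of_subset <;> simp only [append_assoc, take_append, drop_append, hs.length_eq]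
  · exact ((htake.append_right _).append_left _).subset
  · exact ((hdrop.append_right _).append_left _).subset

end LinearOrder

end List

theorem stmt18_general (h h' s : List ℕ)
    (hRL : RightLeaningW h)
    (a b : ℕ)
    (hs : s.Perm ((h.drop a).take b)) (hsorted : s.Pairwise (· < ·))
    (hh' : h' = h.take a ++ s ++ h.drop (a + b)) :
    RightLeaningW h' := by
  obtain ⟨k, hk, hkh, hsplit⟩ := hRL
  have hdecomp : h.take a ++ (h.drop a).take b ++ h.drop (a + b) = h := by
    rw [List.append_assoc, ← List.drop_drop, List.take_append_drop, List.take_append_drop]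
  have hperm : h'.Perm h := by
    rw [hh']
    exact ((hs.append_left _).append_right _).trans (.of_eq hdecomp)
  have hsplit' : (h.take a ++ (h.drop a).take b ++ h.drop (a + b)).SplitsAt k := by
    rwa [hdecomp]
  exact ⟨k, hk, hperm.length_eq ▸ hkh, hh' ▸ hsplit'.sort_infix hs hsorted⟩

/-- Sorting a contiguous subword of a right leaning hit (a length-`c` word whose
values are `c` consecutive integers) into increasing order, in place, yields a
right leaning word. -/
theorem stmt18 (c : ℕ) (hc : 2 ≤ c) (h h' s : List ℕ) (hlen : h.length = c)
    (m : ℕ) (hhit : h.Perm (List.range' m c))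
    (hRL : RightLeaningW h)
    (a b : ℕ) (hab : a + b ≤ c)
    (hs : s.Perm ((h.drop a).take b)) (hsorted : s.Pairwise (· < ·))
    (hh' : h' = h.take a ++ s ++ h.drop (a + b)) :
    RightLeaningW h' :=
  stmt18_general h h' s hRL a b hs hsorted hh'
end
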